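/- Let X be a geodesic metric space, π a Borel probability measure on X × X whose support is c-cyclically monotone for c = d², and suppose (x₁, γ¹(1)), (x₂, γ²(1)) ∈ spt(π) where γ¹, γ² are constant-speed geodesics with γ¹(0) = x₁, γ²(0) = x₂. Then for every t ∈ [0,1], d²(x₁, γ¹(t)) + d²(x₂, γ²(t)) ≤ d²(x₁, γ²(t)) + d²(x₂, γ¹(t)). -/

import Mathlib

/-!
Two-point cyclical monotonicity gives `d₁² + d₂² ≤ d(x₁, y₂)² + d(x₂, y₁)²` for the endpoints
`yᵢ = γⁱ(1)` and lengths `dᵢ = d(xᵢ, yᵢ)`. Along a geodesic from `x` to `y`, the triangle inequality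
through `y` gives `d(p, γ t)² ≥ t d(p, y)² - t(1 - t) d(x, y)²` for every point `p`. Applying this
to `p = x₁` on `γ²` and `p = x₂` on `γ¹`, adding, and using the first inequality bounds the
right-hand side below by `t² (d₁² + d₂²) = d(x₁, γ¹ t)² + d(x₂, γ² t)²`.
-/

open Set

def IsGeodesic {X : Type*} [MetricSpace X] (γ : ℝ → X) : Prop :=
  ∀ s ∈ Icc (0 : ℝ) 1, ∀ t ∈ Icc (0 : ℝ) 1,
    dist (γ s) (γ t) = |s - t| * dist (γ 0) (γ 1)

def CyclicallyMonotone {X : Type*} [MetricSpace X] (Γ : Set (X × X)) : Prop :=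
  ∀ (N : ℕ) (x y : Fin N → X), (∀ i, (x i, y i) ∈ Γ) → ∀ σ : Equiv.Perm (Fin N),
    ∑ i, dist (x i) (y i) ^ 2 ≤ ∑ i, dist (x (σ i)) (y i) ^ 2

/-- The support of a measure on a metric space. -/
def measureSupport {Y : Type*} [MetricSpace Y] [MeasurableSpace Y]
    (π : MeasureTheory.Measure Y) : Set Y :=
  {p | ∀ ε > (0 : ℝ), 0 < π (Metric.ball p ε)}

theorem mul_sq_sub_le_sq_of_sub_le {a A D t : ℝ} (hA : 0 ≤ A)
    (ht₀ : 0 ≤ t) (ht₁ : t ≤ 1) (h : A - (1 - t) * D ≤ a) :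
    t * A ^ 2 - t * (1 - t) * D ^ 2 ≤ a ^ 2 := by
  have hs : 0 ≤ 1 - t := sub_nonneg.2 ht₁
  rcases le_or_gt A ((1 - t) * D) with hAD | hAD
  · -- `t A² ≤ t (1 - t)² D² ≤ t (1 - t) D²`
    have hA2 : A ^ 2 ≤ ((1 - t) * D) ^ 2 := pow_le_pow_left₀ hA hAD 2
    nlinarith [mul_le_mul_of_nonneg_left hA2 ht₀, mul_nonneg (mul_nonneg ht₀ ht₀) hs,
      sq_nonneg D, sq_nonneg a]
  · -- `(A - (1 - t) D)² - (t A² - t (1 - t) D²) = (1 - t) (A - D)²`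
    have hsq : (A - (1 - t) * D) ^ 2 ≤ a ^ 2 := pow_le_pow_left₀ (by linarith) h 2
    nlinarith [mul_nonneg hs (sq_nonneg (A - D))]

namespace IsGeodesic

variable {X : Type*} [MetricSpace X] {γ : ℝ → X} {t : ℝ}

theorem dist_zero_apply (hγ : IsGeodesic γ) (ht : t ∈ Icc (0 : ℝ) 1) :
    dist (γ 0) (γ t) = t * dist (γ 0) (γ 1) := by
  rw [hγ 0 (left_mem_Icc.2 zero_le_one) t ht, zero_sub, abs_neg, abs_of_nonneg ht.1]

theorem dist_apply_one (hγ : IsGeodesic γ) (ht : t ∈ Icc (0 : ℝ) 1) :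
    dist (γ t) (γ 1) = (1 - t) * dist (γ 0) (γ 1) := by
  rw [hγ t ht 1 (right_mem_Icc.2 zero_le_one), abs_sub_comm, abs_of_nonneg (sub_nonneg.2 ht.2)]

theorem mul_dist_sq_sub_le_dist_sq (hγ : IsGeodesic γ) (ht : t ∈ Icc (0 : ℝ) 1) (p : X) :
    t * dist p (γ 1) ^ 2 - t * (1 - t) * dist (γ 0) (γ 1) ^ 2 ≤ dist p (γ t) ^ 2 := by
  refine mul_sq_sub_le_sq_of_sub_le dist_nonneg ht.1 ht.2 ?_
  have := dist_triangle p (γ t) (γ 1)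
  rw [hγ.dist_apply_one ht] at this
  linarith

end IsGeodesic

theorem CyclicallyMonotone.dist_sq_add_le {X : Type*} [MetricSpace X] {Γ : Set (X × X)}
    (hΓ : CyclicallyMonotone Γ) {x₁ x₂ y₁ y₂ : X} (h₁ : (x₁, y₁) ∈ Γ) (h₂ : (x₂, y₂) ∈ Γ) :
    dist x₁ y₁ ^ 2 + dist x₂ y₂ ^ 2 ≤ dist x₂ y₁ ^ 2 + dist x₁ y₂ ^ 2 := by
  have hmem : ∀ i, (![x₁, x₂] i, ![y₁, y₂] i) ∈ Γ := by
    intro i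
    fin_cases i
    exacts [h₁, h₂]
  simpa [Fin.sum_univ_two] using hΓ 2 ![x₁, x₂] ![y₁, y₂] hmem (Equiv.swap 0 1)

theorem two_point_interpolated_monotonicity_general {X : Type*} [MetricSpace X]
    [MeasurableSpace X]
    (π : MeasureTheory.Measure (X × X))
    (hmono : CyclicallyMonotone (measureSupport π))
    (x₁ x₂ : X) (γone γtwo : ℝ → X) (hγone : IsGeodesic γone) (hγtwo : IsGeodesic γtwo)
    (h10 : γone 0 = x₁) (h20 : γtwo 0 = x₂)
    (h1 : (x₁, γone 1) ∈ measureSupport π) (h2 : (x₂, γtwo 1) ∈ measureSupport π) :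
    ∀ t ∈ Icc (0 : ℝ) 1,
      dist x₁ (γone t) ^ 2 + dist x₂ (γtwo t) ^ 2 ≤
        dist x₁ (γtwo t) ^ 2 + dist x₂ (γone t) ^ 2 := by
  intro t ht
  subst h10 h20
  have hswap := hmono.dist_sq_add_le h1 h2
  have hx₁ := hγtwo.mul_dist_sq_sub_le_dist_sq ht (γone 0)
  have hx₂ := hγone.mul_dist_sq_sub_le_dist_sq ht (γtwo 0)
  rw [hγone.dist_zero_apply ht, hγtwo.dist_zero_apply ht]
  linarith [mul_le_mul_of_nonneg_left hswap ht.1]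

theorem two_point_interpolated_monotonicity {X : Type*} [MetricSpace X]
    [MeasurableSpace X] [BorelSpace X]
    (hgeo : ∀ x y : X, ∃ γ : ℝ → X, IsGeodesic γ ∧ γ 0 = x ∧ γ 1 = y)
    (π : MeasureTheory.Measure (X × X)) [MeasureTheory.IsProbabilityMeasure π]
    (hmono : CyclicallyMonotone (measureSupport π))
    (x₁ x₂ : X) (γone γtwo : ℝ → X) (hγone : IsGeodesic γone) (hγtwo : IsGeodesic γtwo)
    (h10 : γone 0 = x₁) (h20 : γtwo 0 = x₂)
    (h1 : (x₁, γone 1) ∈ measureSupport π) (h2 : (x₂, γtwo 1) ∈ measureSupport π) :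
    ∀ t ∈ Icc (0 : ℝ) 1,
      dist x₁ (γone t) ^ 2 + dist x₂ (γtwo t) ^ 2 ≤
        dist x₁ (γtwo t) ^ 2 + dist x₂ (γone t) ^ 2 :=
  two_point_interpolated_monotonicity_general π hmono x₁ x₂ γone γtwo hγone hγtwo h10 h20 h1 h2
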